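/- arXiv:1909.04908 — 6 statements merged into one kernel-verified Lean document; each statement's English description precedes it below -/
import Mathlib

section
/- With notation as in the Corrugation Process, if γ is continuously differentiable in x, then for every i ≠ j, ‖∂_i f₁ − ∂_i f₀‖_∞ ≤ (2‖∂_i γ‖_∞)/N. -/
open MeasureTheory intervalIntegral

/-!
Moving `x` in the direction `eᵢ` leaves `N x_j` unchanged, so `f₁ - f₀ = Γ(x, N x_j) / N` changes
only through its dependence on the loop `γ(x, ·)`. Because `γ(x, ·) - γ̄(x)` has mean zero over a
period, `Γ(x, ·)` is `1`-periodic and may be evaluated on `[0, 1]`; there it is `2C`-Lipschitz in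
the direction `eᵢ`, with `C` coming once from `γ` and once from its average `γ̄`. Dividing by `N`
gives the bound on the directional derivative.
-/

section

variable {F : Type*} [NormedAddCommGroup F] [NormedSpace ℝ F]

/-- The paper's `Γ(x, T)`, for the loop `φ = γ(x, ·)`. -/
noncomputable def centeredPrimitive (φ : ℝ → F) (T : ℝ) : F :=
  ∫ s in (0 : ℝ)..T, (φ s - ∫ u in (0 : ℝ)..1, φ u)

theorem centeredPrimitive_sub {φ ψ : ℝ → F} (hφ : Continuous φ) (hψ : Continuous ψ) (T : ℝ) :
    centeredPrimitive (φ - ψ) T = centeredPrimitive φ T - centeredPrimitive ψ T := by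
  unfold centeredPrimitive
  simp only [Pi.sub_apply]
  rw [integral_sub (hφ.intervalIntegrable 0 1) (hψ.intervalIntegrable 0 1),
    ← integral_sub (f := fun s => φ s - ∫ u in (0 : ℝ)..1, φ u)
      (g := fun s => ψ s - ∫ u in (0 : ℝ)..1, ψ u)
      ((hφ.sub continuous_const).intervalIntegrable _ _)
      ((hψ.sub continuous_const).intervalIntegrable _ _)]
  congr 1
  ext s
  abel

variable [CompleteSpace F]

theorem Function.Periodic.centeredPrimitive {φ : ℝ → F} (hper : Function.Periodic φ 1)
    (hφ : Continuous φ) : Function.Periodic (centeredPrimitive φ) 1 := by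
  intro T
  have hint : ∀ a b, IntervalIntegrable (fun s => φ s - ∫ u in (0 : ℝ)..1, φ u) volume a b :=
    fun a b => (hφ.sub continuous_const).intervalIntegrable a b
  have hper' : Function.Periodic (fun s => φ s - ∫ u in (0 : ℝ)..1, φ u) 1 := fun s => by
    simp only [hper s]
  have hmean_zero : ∫ s in (0 : ℝ)..1, (φ s - ∫ u in (0 : ℝ)..1, φ u) = 0 := by
    rw [integral_sub (hφ.intervalIntegrable 0 1) intervalIntegrable_const,
      intervalIntegral.integral_const, sub_zero, one_smul, sub_self]
  unfold _root_.centeredPrimitive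
  rw [hper'.intervalIntegral_add_eq_add 0 T hint, zero_add, hmean_zero, add_zero]

theorem norm_centeredPrimitive_le {φ : ℝ → F} (hper : Function.Periodic φ 1) (hφ : Continuous φ)
    {δ : ℝ} (hδ : ∀ s, ‖φ s‖ ≤ δ) (T : ℝ) : ‖centeredPrimitive φ T‖ ≤ 2 * δ := by
  have hδ₀ : 0 ≤ δ := (norm_nonneg _).trans (hδ 0)
  have hfract : centeredPrimitive φ T = centeredPrimitive φ (Int.fract T) := by
    have h := (hper.centeredPrimitive hφ).sub_int_mul_eq (x := T) ⌊T⌋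
    rw [mul_one] at h
    exact h.symm
  have hmean : ‖∫ u in (0 : ℝ)..1, φ u‖ ≤ δ := by
    simpa using norm_integral_le_of_norm_le_const (a := 0) (b := 1) fun u _ => hδ u
  have hlength : |Int.fract T - 0| ≤ 1 := by
    rw [sub_zero, abs_of_nonneg (Int.fract_nonneg T)]
    exact (Int.fract_lt_one T).le
  rw [hfract]
  calc ‖centeredPrimitive φ (Int.fract T)‖ ≤ 2 * δ * |Int.fract T - 0| :=
        norm_integral_le_of_norm_le_const fun s _ =>
          (norm_sub_le _ _).trans (by linarith [hδ s])
    _ ≤ 2 * δ := mul_le_of_le_one_right (by positivity) hlength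

end

section

variable {E F : Type*} [NormedAddCommGroup E] [NormedSpace ℝ E]
  [NormedAddCommGroup F] [NormedSpace ℝ F]

theorem norm_sub_le_of_norm_fderiv_apply_le {f : E → F} (hf : Differentiable ℝ f) {v : E}
    {C : ℝ} (hC : ∀ y, ‖fderiv ℝ f y v‖ ≤ C) (x : E) (t : ℝ) :
    ‖f (x + t • v) - f x‖ ≤ C * |t| := by
  have hline : ∀ r : ℝ, HasDerivAt (fun r : ℝ => f (x + r • v)) (fderiv ℝ f (x + r • v) v) r :=
    fun r => (hf _).hasFDerivAt.comp_hasDerivAt r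
      (by simpa using ((hasDerivAt_id' r).smul_const v).const_add x)
  simpa using convex_univ.norm_image_sub_le_of_norm_hasDerivWithin_le
    (fun r _ => (hline r).hasDerivWithinAt) (fun r _ => hC _) (Set.mem_univ 0) (Set.mem_univ t)

theorem norm_fderiv_apply_le_of_norm_sub_le {g : E → F} {x : E} (hg : DifferentiableAt ℝ g x)
    {v : E} {K : ℝ} (hK : 0 ≤ K) (hslope : ∀ t : ℝ, ‖g (x + t • v) - g x‖ ≤ K * |t|) :
    ‖fderiv ℝ g x v‖ ≤ K :=
  HasDerivAt.le_of_lip' (hg.hasFDerivAt.hasLineDerivAt v) hK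
    (Filter.Eventually.of_forall fun t => by simpa using hslope t)

end

/-- Corrugation Process: control of derivatives in the directions `i ≠ j`:
`‖∂ᵢ f₁ − ∂ᵢ f₀‖_∞ ≤ 2‖∂ᵢ γ‖_∞ / N`. -/
theorem corrugation_process_other_derivatives {m n : ℕ}
    (f₀ : (Fin m → ℝ) → EuclideanSpace ℝ (Fin n))
    (hf₀ : ContDiff ℝ 1 f₀)
    (γ : (Fin m → ℝ) → ℝ → EuclideanSpace ℝ (Fin n))
    (hγ : Continuous fun p : (Fin m → ℝ) × ℝ => γ p.1 p.2)
    (hγdiff : ∀ s, Differentiable ℝ fun x => γ x s)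
    (hper : ∀ x s, γ x (s + 1) = γ x s)
    (j i : Fin m) (hij : i ≠ j)
    (C : ℝ)
    (hC : ∀ x s, ‖fderiv ℝ (fun y => γ y s) x (Pi.single i 1 : Fin m → ℝ)‖ ≤ C)
    (N : ℝ) (hN : 0 < N)
    (f₁ : (Fin m → ℝ) → EuclideanSpace ℝ (Fin n))
    (hf₁ : ∀ x, f₁ x = f₀ x + (1 / N) •
      ∫ s in (0:ℝ)..(N * x j), (γ x s - ∫ u in (0:ℝ)..1, γ x u))
    (hf₁diff : Differentiable ℝ f₁) :
    ∀ x, ‖fderiv ℝ f₁ x (Pi.single i 1 : Fin m → ℝ) -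
          fderiv ℝ f₀ x (Pi.single i 1 : Fin m → ℝ)‖ ≤ 2 * C / N := by
  intro x
  set e : Fin m → ℝ := Pi.single i 1
  have hC₀ : 0 ≤ C := (norm_nonneg _).trans (hC x 0)
  have hloop : ∀ y, Continuous (γ y) := fun y => hγ.comp (continuous_const.prodMk continuous_id)
  have hperiodic : ∀ y, Function.Periodic (γ y) 1 := hper
  have hdiff_eq : ∀ y, (f₁ - f₀) y = (1 / N) • centeredPrimitive (γ y) (N * y j) := fun y => by
    rw [Pi.sub_apply, hf₁ y, add_sub_cancel_left]
    rfl
  have hslope : ∀ t : ℝ, ‖(f₁ - f₀) (x + t • e) - (f₁ - f₀) x‖ ≤ 2 * C / N * |t| := by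
    intro t
    have hxj : (x + t • e) j = x j := by simp [e, Pi.single_eq_of_ne hij.symm]
    have hΓ := norm_centeredPrimitive_le ((hperiodic _).sub (hperiodic x))
      ((hloop _).sub (hloop x)) (fun s => norm_sub_le_of_norm_fderiv_apply_le (hγdiff s)
        (hC · s) x t) (N * x j)
    rw [hdiff_eq, hdiff_eq, hxj, ← smul_sub, ← centeredPrimitive_sub (hloop _) (hloop x),
      norm_smul, Real.norm_of_nonneg (by positivity)]
    calc 1 / N * ‖centeredPrimitive (γ (x + t • e) - γ x) (N * x j)‖
        ≤ 1 / N * (2 * (C * |t|)) := by gcongr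
      _ = 2 * C / N * |t| := by ring
  have hf₀diff : DifferentiableAt ℝ f₀ x := hf₀.differentiable one_ne_zero x
  rw [← _root_.sub_apply, ← fderiv_sub (hf₁diff x) hf₀diff]
  exact norm_fderiv_apply_le_of_norm_sub_le ((hf₁diff x).sub hf₀diff) (by positivity) hslope
end

section
/- With notation as in the Corrugation Process, if γ satisfies the Average Constraint ∂_j f₀(x) = ∫₀¹ γ(x,t) dt for all x, then for all x ∈ [0,1]^m, ‖∂_j f₁(x) − γ(x, N x_j)‖ ≤ (2‖∂_j γ‖_∞)/N. -/
/-!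
Along the line `t ↦ x + t eⱼ`, `f₁` is `f₀` plus `1/N` times an integral whose integrand and
upper limit `N (xⱼ + t)` both move with `t`. By the Leibniz rule the moving endpoint contributes
`γ(x, N xⱼ) - γ̄(x)`, which the Average Constraint `∂ⱼ f₀ = γ̄` turns into `γ(x, N xⱼ)`, so
`∂ⱼ f₁(x) - γ(x, N xⱼ)` is `1/N` times the integral over `[0, N xⱼ]` of `∂ⱼγ` minus its mean.
That integrand is 1-periodic with mean zero and bounded by `2‖∂ⱼγ‖_∞`: whole periods contribute
nothing, and the remaining fraction of a period contributes at most `2‖∂ⱼγ‖_∞`.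
-/

open MeasureTheory intervalIntegral Filter Topology Asymptotics Function

variable {E : Type*} [NormedAddCommGroup E] [NormedSpace ℝ E] {C : ℝ}

theorem norm_sub_intervalIntegral_le_two_mul {g : ℝ → E} (hg : ∀ s, ‖g s‖ ≤ C) (s : ℝ) :
    ‖g s - ∫ u in (0 : ℝ)..1, g u‖ ≤ 2 * C := by
  have hint : ‖∫ u in (0 : ℝ)..1, g u‖ ≤ C := by
    simpa using norm_integral_le_of_norm_le_const (a := 0) (b := 1) fun u _ => hg u
  linarith [norm_sub_le (g s) (∫ u in (0 : ℝ)..1, g u), hg s]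

theorem Function.Periodic.norm_intervalIntegral_le_of_integral_eq_zero {g : ℝ → E} {T K : ℝ}
    (hg : Periodic g T) (hT : 0 < T) (hint : IntervalIntegrable g volume 0 T)
    (hmean : ∫ s in (0 : ℝ)..T, g s = 0) (hK : ∀ s, ‖g s‖ ≤ K) (c : ℝ) :
    ‖∫ s in (0 : ℝ)..c, g s‖ ≤ K * T := by
  have hint' := hg.intervalIntegrable₀ hT.ne' hint
  set n := ⌊c / T⌋
  have hperiods : ∫ s in (0 : ℝ)..n • T, g s = 0 := by
    simpa [hmean] using hg.intervalIntegral_add_zsmul_eq n 0 hint'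
  have hn : n • T ≤ c := by
    simpa [zsmul_eq_mul] using (le_div_iff₀ hT).1 (Int.floor_le (c / T))
  have hn' : c < n • T + T := by
    simpa [zsmul_eq_mul, add_mul] using (div_lt_iff₀ hT).1 (Int.lt_floor_add_one (c / T))
  rw [← integral_add_adjacent_intervals (hint' 0 (n • T)) (hint' _ c), hperiods, zero_add]
  calc ‖∫ s in n • T..c, g s‖ ≤ K * |c - n • T| :=
        norm_integral_le_of_norm_le_const fun s _ => hK s
    _ ≤ K * T := by
      gcongr
      · exact (norm_nonneg _).trans (hK 0)
      · rw [abs_of_nonneg (by linarith)]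
        linarith

theorem Function.Periodic.norm_intervalIntegral_sub_average_le [CompleteSpace E] {g : ℝ → E}
    (hg : Periodic g 1) (hint : IntervalIntegrable g volume 0 1) (hC : ∀ s, ‖g s‖ ≤ C) (c : ℝ) :
    ‖∫ s in (0 : ℝ)..c, (g s - ∫ u in (0 : ℝ)..1, g u)‖ ≤ 2 * C := by
  have hmean : ∫ s in (0 : ℝ)..1, (g s - ∫ u in (0 : ℝ)..1, g u) = 0 := by
    rw [integral_sub hint intervalIntegrable_const, intervalIntegral.integral_const]
    simp
  have hper : Periodic (fun s => g s - ∫ u in (0 : ℝ)..1, g u) 1 := fun s => by simp [hg s]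
  simpa using hper.norm_intervalIntegral_le_of_integral_eq_zero one_pos
    (hint.sub intervalIntegrable_const) hmean (norm_sub_intervalIntegral_le_two_mul hC) c

theorem hasDerivAt_zero_of_isBigO_sub_mul {R : ℝ → E} {u : ℝ → ℝ} {t₀ : ℝ}
    (hR : R =O[𝓝 t₀] fun t => (t - t₀) * u t) (hu : Tendsto u (𝓝 t₀) (𝓝 0)) :
    HasDerivAt R 0 t₀ := by
  have hR₀ : R t₀ = 0 := hR.eq_zero_imp.self_of_nhds (by simp)
  rw [hasDerivAt_iff_isLittleO]
  simpa [hR₀] using hR.trans_isLittleO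
    (((isBigO_refl (· - t₀) _).mul_isLittleO (isLittleO_one_iff ℝ |>.2 hu)).congr_right
      fun t => mul_one _)

section ParametricIntegral

variable {F F' : ℝ → ℝ → E}

theorem stronglyMeasurable_of_hasDerivAt_param [CompleteSpace E] (hF : Continuous (uncurry F))
    (hF' : ∀ t s, HasDerivAt (F · s) (F' t s) t) (t : ℝ) : StronglyMeasurable (F' t) := by
  have hderiv := (stronglyMeasurable_deriv_with_param (f := fun s t => F t s)
    (hF.comp continuous_swap)).comp_measurable (measurable_id.prodMk (measurable_const (a := t)))
  simpa only [comp_def, (hF' t _).deriv, id] using hderiv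

theorem intervalIntegrable_of_hasDerivAt_param [CompleteSpace E] (hF : Continuous (uncurry F))
    (hF' : ∀ t s, HasDerivAt (F · s) (F' t s) t) (hC : ∀ t s, ‖F' t s‖ ≤ C) (t a b : ℝ) :
    IntervalIntegrable (F' t) volume a b :=
  intervalIntegrable_const.mono_fun'
    (stronglyMeasurable_of_hasDerivAt_param hF hF' t).aestronglyMeasurable (ae_of_all _ (hC t))

theorem norm_sub_le_of_hasDerivAt_param (hF' : ∀ t s, HasDerivAt (F · s) (F' t s) t)
    (hC : ∀ t s, ‖F' t s‖ ≤ C) (t t₀ s : ℝ) : ‖F t s - F t₀ s‖ ≤ C * |t - t₀| :=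
  convex_univ.norm_image_sub_le_of_norm_hasDerivWithin_le
    (fun τ _ => (hF' τ s).hasDerivWithinAt) (fun τ _ => hC τ s) trivial trivial

theorem hasDerivAt_intervalIntegral_param [CompleteSpace E] (hF : Continuous (uncurry F))
    (hF' : ∀ t s, HasDerivAt (F · s) (F' t s) t) (hC : ∀ t s, ‖F' t s‖ ≤ C) (a b t₀ : ℝ) :
    HasDerivAt (fun t => ∫ s in a..b, F t s) (∫ s in a..b, F' t₀ s) t₀ :=
  (hasDerivAt_integral_of_dominated_loc_of_deriv_le (bound := fun _ => C) univ_mem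
    (.of_forall fun t => (hF.comp (Continuous.prodMk_right t)).aestronglyMeasurable)
    ((hF.comp (Continuous.prodMk_right t₀)).intervalIntegrable a b)
    (stronglyMeasurable_of_hasDerivAt_param hF hF' t₀).aestronglyMeasurable
    (ae_of_all _ fun s _ t _ => hC t s) intervalIntegrable_const
    (ae_of_all _ fun s _ t _ => hF' t s)).2

theorem hasDerivAt_intervalIntegral_param_of_hasDerivAt [CompleteSpace E]
    (hF : Continuous (uncurry F)) (hF' : ∀ t s, HasDerivAt (F · s) (F' t s) t)
    (hC : ∀ t s, ‖F' t s‖ ≤ C) {b : ℝ → ℝ} {b' t₀ : ℝ} (hb : HasDerivAt b b' t₀) (a : ℝ) :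
    HasDerivAt (fun t => ∫ s in a..b t, F t s) ((∫ s in a..b t₀, F' t₀ s) + b' • F t₀ (b t₀))
      t₀ := by
  have hFt : ∀ t, Continuous (F t) := fun t => hF.comp (Continuous.prodMk_right t)
  have hsplit : (fun t => ∫ s in a..b t, F t s) = fun t => (∫ s in a..b t₀, F t s) +
      (∫ s in b t₀..b t, F t₀ s) + ∫ s in b t₀..b t, (F t s - F t₀ s) := by
    ext t
    rw [integral_sub ((hFt t).intervalIntegrable ..) ((hFt t₀).intervalIntegrable ..),
      add_assoc, add_sub_cancel, integral_add_adjacent_intervals ((hFt t).intervalIntegrable ..)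
        ((hFt t).intervalIntegrable ..)]
  have hfixed := hasDerivAt_intervalIntegral_param hF hF' hC a (b t₀) t₀
  have hmoving : HasDerivAt (fun t => ∫ s in b t₀..b t, F t₀ s) (b' • F t₀ (b t₀)) t₀ :=
    ((hFt t₀).integral_hasStrictDerivAt (b t₀) (b t₀)).hasDerivAt.scomp t₀ hb
  -- the integrand is `O(t - t₀)` on an interval of length `o(1)`
  have hrem : HasDerivAt (fun t => ∫ s in b t₀..b t, (F t s - F t₀ s)) 0 t₀ := by
    refine hasDerivAt_zero_of_isBigO_sub_mul (u := fun t => b t - b t₀)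
      (.of_bound C (.of_forall fun t => ?_)) ?_
    · calc ‖∫ s in b t₀..b t, (F t s - F t₀ s)‖ ≤ C * |t - t₀| * |b t - b t₀| :=
            norm_integral_le_of_norm_le_const fun s _ =>
              norm_sub_le_of_hasDerivAt_param hF' hC t t₀ s
        _ = C * ‖(t - t₀) * (b t - b t₀)‖ := by rw [Real.norm_eq_abs, abs_mul, mul_assoc]
    · simpa using hb.continuousAt.tendsto.sub_const (b t₀)
  rw [hsplit, ← add_zero ((∫ s in a..b t₀, F' t₀ s) + b' • F t₀ (b t₀))]
  exact (hfixed.add hmoving).add hrem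

theorem hasDerivAt_intervalIntegral_sub_average [CompleteSpace E]
    (hF : Continuous (uncurry F)) (hF' : ∀ t s, HasDerivAt (F · s) (F' t s) t)
    (hC : ∀ t s, ‖F' t s‖ ≤ C) {b : ℝ → ℝ} {b' t₀ : ℝ} (hb : HasDerivAt b b' t₀) (a : ℝ) :
    HasDerivAt (fun t => ∫ s in a..b t, (F t s - ∫ u in (0 : ℝ)..1, F t u))
      ((∫ s in a..b t₀, (F' t₀ s - ∫ u in (0 : ℝ)..1, F' t₀ u)) +
        b' • (F t₀ (b t₀) - ∫ u in (0 : ℝ)..1, F t₀ u)) t₀ := by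
  have havg (t : ℝ) := hasDerivAt_intervalIntegral_param hF hF' hC 0 1 t
  have havg_cont : Continuous fun t => ∫ u in (0 : ℝ)..1, F t u :=
    continuous_iff_continuousAt.2 fun t => (havg t).continuousAt
  exact hasDerivAt_intervalIntegral_param_of_hasDerivAt
    (F := fun t s => F t s - ∫ u in (0 : ℝ)..1, F t u) (hF.sub (havg_cont.comp continuous_fst))
    (fun t s => (hF' t s).sub (havg t)) (fun t s => norm_sub_intervalIntegral_le_two_mul (hC t) s) hb a

end ParametricIntegral

/-- Corrugation Process: if the Average Constraint holds, then
`‖∂ⱼ f₁(x) − γ(x, N xⱼ)‖ ≤ 2‖∂ⱼ γ‖_∞ / N`. -/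
theorem corrugation_process_main_derivative {m n : ℕ}
    (f₀ : (Fin m → ℝ) → EuclideanSpace ℝ (Fin n))
    (hf₀ : ContDiff ℝ 2 f₀)
    (γ : (Fin m → ℝ) → ℝ → EuclideanSpace ℝ (Fin n))
    (hγ : Continuous fun p : (Fin m → ℝ) × ℝ => γ p.1 p.2)
    (hγdiff : ∀ s, Differentiable ℝ fun x => γ x s)
    (hper : ∀ x s, γ x (s + 1) = γ x s)
    (j : Fin m)
    (hAC : ∀ x, fderiv ℝ f₀ x (Pi.single j 1 : Fin m → ℝ) = ∫ t in (0:ℝ)..1, γ x t)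
    (C : ℝ)
    (hC : ∀ x s, ‖fderiv ℝ (fun y => γ y s) x (Pi.single j 1 : Fin m → ℝ)‖ ≤ C)
    (N : ℝ) (hN : 0 < N)
    (f₁ : (Fin m → ℝ) → EuclideanSpace ℝ (Fin n))
    (hf₁ : ∀ x, f₁ x = f₀ x + (1 / N) •
      ∫ s in (0:ℝ)..(N * x j), (γ x s - ∫ u in (0:ℝ)..1, γ x u))
    (hf₁diff : Differentiable ℝ f₁) :
    ∀ x, ‖fderiv ℝ f₁ x (Pi.single j 1 : Fin m → ℝ) - γ x (N * x j)‖ ≤ 2 * C / N := by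
  intro x₀
  set e : Fin m → ℝ := Pi.single j 1
  set Γ' : ℝ → ℝ → EuclideanSpace ℝ (Fin n) :=
    fun t s => fderiv ℝ (fun y => γ y s) (x₀ + t • e) e
  have hΓ : Continuous (uncurry fun (t s : ℝ) => γ (x₀ + t • e) s) :=
    hγ.comp (f := fun p : ℝ × ℝ => (x₀ + p.1 • e, p.2)) (by fun_prop)
  have hΓ' (t s : ℝ) : HasDerivAt (fun t => γ (x₀ + t • e) s) (Γ' t s) t :=
    (hγdiff s _).hasFDerivAt.comp_hasDerivAt t
      (by simpa using ((hasDerivAt_id t).smul_const e).const_add x₀)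
  have hb : HasDerivAt (fun t : ℝ => N * (x₀ + t • e) j) N 0 := by
    simpa [e] using ((hasDerivAt_id (0 : ℝ)).const_add (x₀ j)).const_mul N
  have hf₀' : HasLineDerivAt ℝ f₀ (∫ u in (0:ℝ)..1, γ x₀ u) x₀ e :=
    hAC x₀ ▸ (hf₀.differentiable (by norm_num) x₀).hasFDerivAt.hasLineDerivAt e
  have hf₁' : HasLineDerivAt ℝ f₁ (fderiv ℝ f₁ x₀ e) x₀ e :=
    (hf₁diff x₀).hasFDerivAt.hasLineDerivAt e
  have hderiv := hf₁'.unique <| (hf₀'.add ((hasDerivAt_intervalIntegral_sub_average hΓ hΓ'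
    (fun t s => hC _ s) hb 0).const_smul (1 / N))).congr_of_eventuallyEq (.of_forall fun t => hf₁ _)
  have hdiff : fderiv ℝ f₁ x₀ e - γ x₀ (N * x₀ j) = (1 / N) •
      ∫ s in (0:ℝ)..N * x₀ j, (Γ' 0 s - ∫ u in (0:ℝ)..1, Γ' 0 u) := by
    rw [hderiv]
    simp only [zero_smul, add_zero, smul_add, smul_smul, one_div_mul_cancel hN.ne', one_smul]
    abel
  have hbound := (show Periodic (Γ' 0) 1 from fun s => by simp only [Γ', hper])
    |>.norm_intervalIntegral_sub_average_le
      (intervalIntegrable_of_hasDerivAt_param hΓ hΓ' (fun t s => hC _ s) 0 0 1) (hC _) (N * x₀ j)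
  rw [hdiff, norm_smul, norm_div, norm_one, Real.norm_of_nonneg hN.le, one_div_mul_eq_div]
  gcongr
end

section
/- Let W be a real vector space of dimension 2m with a complex structure J (J² = −Id), and let L : ℝ^m → W be a totally real injective linear map, i.e. L(ℝ^m) ⊕ J L(ℝ^m) = W. Let λ : ℝ^m → ℝ be a nonzero linear form, u ∈ ℝ^m with λ(u) = 1, and set P = L(ker λ) + J L(ker λ). For v ∈ W define L_v = L + (v − L(u)) ⊗ λ. Then L_v is totally real if and only if v ∉ P. -/
open LinearMap Submodule

private lemma finrank_map_inj {V W : Type*} [AddCommGroup V] [Module ℝ V]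
    [AddCommGroup W] [Module ℝ W] (f : V →ₗ[ℝ] W) (hf : Function.Injective f)
    (p : Submodule ℝ V) : Module.finrank ℝ (p.map f) = Module.finrank ℝ p :=
  (LinearEquiv.finrank_eq (Submodule.equivMapOfInjective f hf p)).symm

/-- Slice of the totally real relation: `L_v = L + (v − L(u)) ⊗ λ` is totally
real iff `v ∉ P = L(ker λ) + J L(ker λ)`. -/
theorem totally_real_slice {m : ℕ} {W : Type*} [AddCommGroup W] [Module ℝ W]
    [FiniteDimensional ℝ W] (hdim : Module.finrank ℝ W = 2 * m)
    (J : W →ₗ[ℝ] W) (hJ : J ∘ₗ J = -LinearMap.id)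
    (L : (Fin m → ℝ) →ₗ[ℝ] W) (hLinj : Function.Injective L)
    (hTR : IsCompl (LinearMap.range L) ((LinearMap.range L).map J))
    (lam : (Fin m → ℝ) →ₗ[ℝ] ℝ) (hlam : lam ≠ 0)
    (u : Fin m → ℝ) (hu : lam u = 1) (v : W) :
    IsCompl (LinearMap.range (L + lam.smulRight (v - L u)))
        ((LinearMap.range (L + lam.smulRight (v - L u))).map J) ↔
      v ∉ (LinearMap.ker lam).map L ⊔ ((LinearMap.ker lam).map L).map J := by
  classical
  have hJJ : ∀ w, J (J w) = -w := fun w => by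
    have := congrFun (congrArg DFunLike.coe hJ) w
    simpa using this
  have hJinj : Function.Injective J := by
    have : Function.LeftInverse (fun w => -J w) J := fun w => by
      show -J (J w) = w
      rw [hJJ, neg_neg]
    exact this.injective
  -- m ≥ 1
  have hm : 1 ≤ m := by
    rcases Nat.eq_zero_or_pos m with hm0 | hm0
    · subst hm0
      have : u = 0 := funext fun i => i.elim0
      rw [this, map_zero] at hu
      exact (zero_ne_one hu).elim
    · exact hm0
  set Lv := L + lam.smulRight (v - L u) with hLvdef
  set K : Submodule ℝ W := (ker lam).map L with hKdef
  set P : Submodule ℝ W := K ⊔ K.map J with hPdef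
  -- finrank ker lam = m - 1
  have hrange : range lam = ⊤ := by
    rw [LinearMap.range_eq_top]
    intro c
    exact ⟨c • u, by simp [hu]⟩
  have hkerlam : Module.finrank ℝ (ker lam) = m - 1 := by
    have h1 := lam.finrank_range_add_finrank_ker
    rw [hrange, finrank_top, Module.finrank_self, Module.finrank_fin_fun] at h1
    omega
  have hKrank : Module.finrank ℝ K = m - 1 := by
    rw [hKdef, finrank_map_inj L hLinj, hkerlam]
  have hKJrank : Module.finrank ℝ (K.map J) = m - 1 := by
    rw [finrank_map_inj J hJinj, hKrank]
  have hKle : K ≤ range L := LinearMap.map_le_range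
  have hKdisj : Disjoint K (K.map J) :=
    hTR.1.mono hKle (Submodule.map_mono hKle)
  have hPrank : Module.finrank ℝ P = (m - 1) + (m - 1) := by
    have := Submodule.finrank_sup_add_finrank_inf_eq K (K.map J)
    rw [hKdisj.eq_bot] at this
    simpa [hKrank, hKJrank] using this
  -- P is J-invariant
  have hJJK : (K.map J).map J = K := by
    ext x
    simp only [Submodule.mem_map]
    constructor
    · rintro ⟨y, ⟨z, hz, rfl⟩, rfl⟩
      rw [hJJ]
      exact K.neg_mem hz
    · intro hx
      refine ⟨J (-x), ⟨-x, K.neg_mem hx, rfl⟩, ?_⟩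
      rw [hJJ, neg_neg]
  have hPJ : P.map J = P := by
    rw [hPdef, Submodule.map_sup, hJJK, sup_comm]
  -- range Lv = K ⊔ span {v}
  have hLvker : ∀ x, lam x = 0 → Lv x = L x := by
    intro x hx
    simp [hLvdef, LinearMap.smulRight_apply, hx]
  have hLvu : Lv u = v := by
    simp [hLvdef, LinearMap.smulRight_apply, hu]
  have hQ : range Lv = K ⊔ (ℝ ∙ v) := by
    apply le_antisymm
    · rintro _ ⟨x, rfl⟩
      have hx : lam (x - lam x • u) = 0 := by simp [hu]
      have hdecomp : Lv x = L (x - lam x • u) + lam x • v := by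
        simp only [hLvdef, LinearMap.add_apply, LinearMap.smulRight_apply,
          map_sub, map_smul, smul_sub]
        abel
      rw [hdecomp]
      exact Submodule.add_mem _
        (Submodule.mem_sup_left ⟨x - lam x • u, hx, rfl⟩)
        (Submodule.mem_sup_right (Submodule.smul_mem _ _
          (Submodule.mem_span_singleton_self v)))
    · apply sup_le
      · rintro _ ⟨y, hy, rfl⟩
        exact ⟨y, (hLvker y hy).symm ▸ rfl⟩
      · rw [Submodule.span_singleton_le_iff_mem]
        exact ⟨u, hLvu⟩
  have hQJ : (range Lv).map J = K.map J ⊔ (ℝ ∙ (J v)) := by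
    rw [hQ, Submodule.map_sup, Submodule.map_span, Set.image_singleton]
  have hsup : range Lv ⊔ (range Lv).map J = P ⊔ ((ℝ ∙ v) ⊔ (ℝ ∙ (J v))) := by
    rw [hQJ, hQ, sup_sup_sup_comm, ← hPdef]
  constructor
  · -- IsCompl → v ∉ P
    intro hcompl hvP
    have hJvP : J v ∈ P := hPJ ▸ Submodule.mem_map_of_mem hvP
    have htop : (⊤ : Submodule ℝ W) = P ⊔ ((ℝ ∙ v) ⊔ (ℝ ∙ (J v))) := by
      rw [← hsup, hcompl.2.eq_top]
    have hle : (⊤ : Submodule ℝ W) ≤ P := by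
      rw [htop]
      refine sup_le le_rfl (sup_le ?_ ?_) <;>
        rw [Submodule.span_singleton_le_iff_mem] <;> assumption
    have h1 := Submodule.finrank_mono hle
    rw [finrank_top, hdim, hPrank] at h1
    omega
  · -- v ∉ P → IsCompl
    intro hvP
    have hv0 : v ≠ 0 := fun h => hvP (h ▸ P.zero_mem)
    have hdisjPv : Disjoint P (ℝ ∙ v) :=
      (Submodule.disjoint_span_singleton' hv0).mpr hvP
    -- J v ∉ P ⊔ span v
    have hJvnot : J v ∉ P ⊔ (ℝ ∙ v) := by
      intro hmem
      obtain ⟨p, hp, w, hw, hpw⟩ := Submodule.mem_sup.mp hmem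
      obtain ⟨a, rfl⟩ := Submodule.mem_span_singleton.mp hw
      -- J v = p + a • v ; apply J
      have hJv : J v = p + a • v := hpw.symm
      have h1 : -v = J p + a • (p + a • v) := by
        conv_lhs => rw [← hJJ v, hJv]
        rw [map_add, map_smul, hJv]
      have h2 : (-(1 + a * a)) • v = J p + a • p := by
        rw [neg_smul, add_smul, one_smul, neg_add]
        rw [smul_add, smul_smul] at h1
        linear_combination (norm := module) h1
      have hmemP : (-(1 + a * a)) • v ∈ P := by
        rw [h2]
        exact P.add_mem (hPJ ▸ Submodule.mem_map_of_mem hp) (P.smul_mem a hp)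
      have hne : (-(1 + a * a)) ≠ 0 := by nlinarith [sq_nonneg a]
      exact hvP ((P.smul_mem_iff hne).mp hmemP)
    have hJv0 : J v ≠ 0 := fun h => hJvnot (h ▸ (P ⊔ (ℝ ∙ v)).zero_mem)
    have hdisjJv : Disjoint (P ⊔ (ℝ ∙ v)) (ℝ ∙ (J v)) :=
      (Submodule.disjoint_span_singleton' hJv0).mpr hJvnot
    -- finranks
    have hPv : Module.finrank ℝ (P ⊔ (ℝ ∙ v) : Submodule ℝ W) = (m - 1) + (m - 1) + 1 := by
      have := Submodule.finrank_sup_add_finrank_inf_eq P (ℝ ∙ v)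
      rw [hdisjPv.eq_bot] at this
      simpa [hPrank, finrank_span_singleton hv0] using this
    have htotrank : Module.finrank ℝ ((P ⊔ (ℝ ∙ v)) ⊔ (ℝ ∙ (J v)) : Submodule ℝ W)
        = (m - 1) + (m - 1) + 1 + 1 := by
      have := Submodule.finrank_sup_add_finrank_inf_eq (P ⊔ (ℝ ∙ v)) (ℝ ∙ (J v))
      rw [hdisjJv.eq_bot] at this
      simpa [hPv, finrank_span_singleton hJv0] using this
    have htop : (P ⊔ (ℝ ∙ v)) ⊔ (ℝ ∙ (J v)) = ⊤ := by
      apply Submodule.eq_top_of_finrank_eq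
      rw [htotrank, hdim]; omega
    have hcodis : Codisjoint (range Lv) ((range Lv).map J) := by
      rw [codisjoint_iff, hsup, ← sup_assoc, htop]
    -- disjointness via dimensions
    have hvK : v ∉ K := fun h => hvP (Submodule.mem_sup_left h)
    have hdisjKv : Disjoint K (ℝ ∙ v) :=
      (Submodule.disjoint_span_singleton' hv0).mpr hvK
    have hQrank : Module.finrank ℝ (range Lv) = m := by
      have := Submodule.finrank_sup_add_finrank_inf_eq K (ℝ ∙ v)
      rw [hdisjKv.eq_bot] at this
      rw [hQ]
      have h2 : Module.finrank ℝ (K ⊔ (ℝ ∙ v) : Submodule ℝ W) = (m - 1) + 1 := by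
        simpa [hKrank, finrank_span_singleton hv0] using this
      rw [h2]; omega
    have hQJrank : Module.finrank ℝ ((range Lv).map J) = m := by
      rw [finrank_map_inj J hJinj, hQrank]
    have hdis : Disjoint (range Lv) ((range Lv).map J) := by
      have h1 := Submodule.finrank_sup_add_finrank_inf_eq (range Lv) ((range Lv).map J)
      rw [codisjoint_iff.mp hcodis] at h1
      rw [finrank_top, hdim, hQrank, hQJrank] at h1
      have h2 : Module.finrank ℝ (range Lv ⊓ (range Lv).map J : Submodule ℝ W) = 0 := by
        omega
      rw [disjoint_iff]
      exact Submodule.finrank_eq_zero.mp h2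
    exact ⟨hdis, hcodis⟩
end

section
/- Let n = m + 1, L : ℝ^m → ℝ^n a linear map of rank m, λ : ℝ^m → ℝ a nonzero linear form and u ∈ ℝ^m with λ(u) = 1. For v ∈ ℝ^n set L_v = L + (v − L(u)) ⊗ λ. Then L_v has rank m if and only if v ∉ L(ker λ). -/
open LinearMap

/-- Slice of the codimension-one immersion relation: for `L : ℝ^m → ℝ^{m+1}` of
rank `m`, the map `L_v = L + (v − L(u)) ⊗ λ` has rank `m` iff `v ∉ L(ker λ)`. -/
theorem codim_one_immersion_slice {m : ℕ}
    (L : (Fin m → ℝ) →ₗ[ℝ] (Fin (m + 1) → ℝ))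
    (hL : Module.finrank ℝ (LinearMap.range L) = m)
    (lam : (Fin m → ℝ) →ₗ[ℝ] ℝ) (hlam : lam ≠ 0)
    (u : Fin m → ℝ) (hu : lam u = 1) (v : Fin (m + 1) → ℝ) :
    Module.finrank ℝ (LinearMap.range (L + lam.smulRight (v - L u))) = m ↔
      v ∉ (LinearMap.ker lam).map L := by
  have hm : 0 < m := by
    rcases Nat.eq_zero_or_pos m with h | h
    · exfalso
      subst h
      have : u = 0 := Subsingleton.elim u 0
      rw [this, map_zero] at hu
      exact one_ne_zero hu.symm
    · exact h
  set Lv := L + lam.smulRight (v - L u) with hLv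
  have hinj : Function.Injective L := by
    have h1 := LinearMap.finrank_range_add_finrank_ker L
    rw [hL] at h1
    simp only [Module.finrank_fintype_fun_eq_card, Fintype.card_fin] at h1
    have h0 : Module.finrank ℝ (LinearMap.ker L) = 0 := by omega
    rw [← LinearMap.ker_eq_bot]
    exact Submodule.finrank_eq_zero.mp h0
  have hlamsurj : LinearMap.range lam = ⊤ := by
    rw [LinearMap.range_eq_top]
    intro c
    exact ⟨c • u, by simp [hu]⟩
  have hker : Module.finrank ℝ (LinearMap.ker lam) = m - 1 := by
    have h1 := LinearMap.finrank_range_add_finrank_ker lam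
    rw [hlamsurj] at h1
    simp only [Module.finrank_fintype_fun_eq_card, Fintype.card_fin,
      finrank_top, Module.finrank_self] at h1
    omega
  set W := (LinearMap.ker lam).map L with hW
  have hWfin : Module.finrank ℝ W = m - 1 := by
    rw [← hker]
    exact (Submodule.equivMapOfInjective L hinj _).finrank_eq.symm
  have hrange : LinearMap.range Lv = W ⊔ Submodule.span ℝ {v} := by
    apply le_antisymm
    · rintro _ ⟨x, rfl⟩
      have hx : Lv x = L (x - lam x • u) + lam x • v := by
        simp only [hLv, LinearMap.add_apply, LinearMap.smulRight_apply, map_sub, map_smul,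
          smul_sub]
        abel
      rw [hx]
      exact Submodule.add_mem_sup ⟨x - lam x • u, by simp [hu], rfl⟩
        (Submodule.smul_mem _ _ (Submodule.mem_span_singleton_self v))
    · rw [sup_le_iff]
      constructor
      · rintro _ ⟨x, hx, rfl⟩
        refine ⟨x, ?_⟩
        have hx0 : lam x = 0 := hx
        simp [hLv, hx0]
      · rw [Submodule.span_singleton_le_iff_mem]
        refine ⟨u, ?_⟩
        simp [hLv, hu]
  constructor
  · intro hfin hv
    have hWv : LinearMap.range Lv = W := by
      rw [hrange, sup_eq_left, Submodule.span_singleton_le_iff_mem]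
      exact hv
    rw [hWv, hWfin] at hfin
    omega
  · intro hv
    have hv0 : v ≠ 0 := fun h => hv (h ▸ W.zero_mem)
    have hinf : W ⊓ Submodule.span ℝ {v} = ⊥ := by
      rw [eq_bot_iff]
      rintro x ⟨hxW, hxv⟩
      rcases Submodule.mem_span_singleton.mp hxv with ⟨c, rfl⟩
      rcases eq_or_ne c 0 with rfl | hc
      · simp
      · exfalso
        apply hv
        have : v = c⁻¹ • (c • v) := by rw [smul_smul, inv_mul_cancel₀ hc, one_smul]
        rw [this]
        exact W.smul_mem _ hxW
    have hsum := Submodule.finrank_sup_add_finrank_inf_eq W (Submodule.span ℝ {v})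
    rw [hinf, hWfin, finrank_span_singleton hv0, finrank_bot] at hsum
    rw [hrange]
    omega
end

section
/- Let σ = (x, y, L) with L : T_xM → ℝ^n injective (n = m+1 or the totally real setting), λ(u) = 1, and let γ(·,t) = r cos(α cos 2πt)·𝐭 + r sin(α cos 2πt)·𝐧 + [L(u)]^P, where 𝐭 is the unit vector [L(u)]^{P⊥}/‖[L(u)]^{P⊥}‖, 𝐧 is a unit vector orthogonal to both P and 𝐭, r > 0, and α = J₀⁻¹(‖[L(u)]^{P⊥}‖/r). Then the average of t ↦ γ(·,t) over one period equals L(u). -/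
open intervalIntegral

lemma sin_cos_integral_zero (α : ℝ) :
    (∫ t in (0:ℝ)..1, Real.sin (α * Real.cos (2 * Real.pi * t))) = 0 := by
  have hbase : Continuous fun t : ℝ => α * Real.cos (2 * Real.pi * t) :=
    continuous_const.mul (Real.continuous_cos.comp (continuous_const.mul continuous_id))
  have hc : Continuous fun t : ℝ => Real.sin (α * Real.cos (2 * Real.pi * t)) :=
    Real.continuous_sin.comp hbase
  have h1 : (∫ t in (0:ℝ)..(1/2:ℝ), Real.sin (α * Real.cos (2 * Real.pi * t))) +
      (∫ t in (1/2:ℝ)..1, Real.sin (α * Real.cos (2 * Real.pi * t))) =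
      (∫ t in (0:ℝ)..1, Real.sin (α * Real.cos (2 * Real.pi * t))) :=
    integral_add_adjacent_intervals (hc.intervalIntegrable _ _) (hc.intervalIntegrable _ _)
  have h2 : (∫ t in (1/2:ℝ)..1, Real.sin (α * Real.cos (2 * Real.pi * t))) =
      - (∫ t in (0:ℝ)..(1/2:ℝ), Real.sin (α * Real.cos (2 * Real.pi * t))) := by
    have h3 := intervalIntegral.integral_comp_add_right (a := (0:ℝ)) (b := (1/2:ℝ))
      (d := (1/2:ℝ)) (fun t => Real.sin (α * Real.cos (2 * Real.pi * t)))
    have h4 : ∀ t : ℝ, Real.sin (α * Real.cos (2 * Real.pi * (t + 1/2))) =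
        - Real.sin (α * Real.cos (2 * Real.pi * t)) := by
      intro t
      have : 2 * Real.pi * (t + 1/2) = 2 * Real.pi * t + Real.pi := by ring
      rw [this, Real.cos_add_pi, mul_neg, Real.sin_neg]
    simp only [h4] at h3
    rw [intervalIntegral.integral_neg] at h3
    norm_num at h3 ⊢
    linarith
  linarith

/-- The loop
`γ(t) = r cos(α cos 2πt) 𝐭 + r sin(α cos 2πt) 𝐧 + [L(u)]^P`
with `𝐭 = [L(u)]^{P⊥}/‖[L(u)]^{P⊥}‖` and `α = J₀⁻¹(‖[L(u)]^{P⊥}‖/r)` has average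
`L(u)` over one period. -/
theorem loop_average_eq_Lu {n : ℕ}
    (T Nv wP wperp Lu : EuclideanSpace ℝ (Fin n))
    (α r : ℝ) (hr : 0 < r) (hT : ‖T‖ = 1) (hNv : ‖Nv‖ = 1)
    (hperp : wperp = ‖wperp‖ • T)
    (hα : (∫ t in (0:ℝ)..1, Real.cos (α * Real.cos (2 * Real.pi * t))) = ‖wperp‖ / r)
    (hLu : Lu = wP + wperp) :
    (∫ t in (0:ℝ)..1,
      ((r * Real.cos (α * Real.cos (2 * Real.pi * t))) • T +
       (r * Real.sin (α * Real.cos (2 * Real.pi * t))) • Nv + wP)) = Lu := by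
  have hbase : Continuous fun t : ℝ => α * Real.cos (2 * Real.pi * t) :=
    continuous_const.mul (Real.continuous_cos.comp (continuous_const.mul continuous_id))
  have hcc : Continuous fun t : ℝ => Real.cos (α * Real.cos (2 * Real.pi * t)) :=
    Real.continuous_cos.comp hbase
  have hcs : Continuous fun t : ℝ => Real.sin (α * Real.cos (2 * Real.pi * t)) :=
    Real.continuous_sin.comp hbase
  have i1 : IntervalIntegrable
      (fun t : ℝ => (r * Real.cos (α * Real.cos (2 * Real.pi * t))) • T)
      MeasureTheory.volume 0 1 :=
    ((continuous_const.mul hcc).smul continuous_const).intervalIntegrable _ _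
  have i2 : IntervalIntegrable
      (fun t : ℝ => (r * Real.sin (α * Real.cos (2 * Real.pi * t))) • Nv)
      MeasureTheory.volume 0 1 :=
    ((continuous_const.mul hcs).smul continuous_const).intervalIntegrable _ _
  have i3 : IntervalIntegrable (fun _ : ℝ => wP) MeasureTheory.volume 0 1 :=
    intervalIntegrable_const
  rw [intervalIntegral.integral_add (i1.add i2) i3,
      intervalIntegral.integral_add i1 i2]
  have e1 : (∫ t in (0:ℝ)..1, (r * Real.cos (α * Real.cos (2 * Real.pi * t))) • T)
      = wperp := by
    rw [intervalIntegral.integral_smul_const, intervalIntegral.integral_const_mul, hα]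
    have : r * (‖wperp‖ / r) = ‖wperp‖ := by field_simp
    rw [this]; exact hperp.symm
  have e2 : (∫ t in (0:ℝ)..1, (r * Real.sin (α * Real.cos (2 * Real.pi * t))) • Nv)
      = 0 := by
    rw [intervalIntegral.integral_smul_const, intervalIntegral.integral_const_mul,
      sin_cos_integral_zero, mul_zero, zero_smul]
  rw [e1, e2, intervalIntegral.integral_const, hLu]
  simp [add_comm]
end

section
/- Consider the ℤ-action on [−3,3] × ℝ given by k·(x₁,x₂) = ((−1)^k x₁, x₂ + k), and let e₁, e₂ : [−3,3] × ℝ → ℝ³ satisfy e₁(k·x) = e₁(x) and e₂(k·x) = (−1)^k e₂(x). Suppose α is ℤ-invariant and N ∈ ℕ + 1/2. Then Γ(x,t) = K_c(α(x),t) e₁(x) + K_s(α(x),t) e₂(x) satisfies Γ(1·x, N(x₂+1)) = Γ(x, N x₂), so the corrugated map f₁ = f₀ + (1/N)Γ(·, N x₂) descends to the quotient Möbius strip whenever f₀ does. -/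
open intervalIntegral

private lemma shift_half (h : ℝ → ℝ) (ε : ℝ) (hc : Continuous h)
    (hs : ∀ u, h (u + 1/2) = ε * h u)
    (h0 : (∫ u in (0:ℝ)..(1/2), h u) = 0) (t : ℝ) :
    (∫ u in (0:ℝ)..(t + 1/2), h u) = ε * ∫ u in (0:ℝ)..t, h u := by
  have hint : ∀ a b : ℝ, IntervalIntegrable h MeasureTheory.volume a b :=
    fun a b => hc.intervalIntegrable a b
  have split : (∫ u in (0:ℝ)..(1/2), h u) + (∫ u in (1/2:ℝ)..(t+1/2), h u)
      = ∫ u in (0:ℝ)..(t+1/2), h u :=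
    intervalIntegral.integral_add_adjacent_intervals (hint _ _) (hint _ _)
  have comp : (∫ u in (0:ℝ)..t, h (u + 1/2)) = ∫ u in (1/2:ℝ)..(t+1/2), h u := by
    simpa using intervalIntegral.integral_comp_add_right (a := (0:ℝ)) (b := t) h (1/2)
  rw [← split, h0, zero_add, ← comp]
  simp only [hs]
  exact intervalIntegral.integral_const_mul ε h

private lemma cos_shift (a u : ℝ) :
    Real.cos (a * Real.cos (2 * Real.pi * (u + 1/2))) =
    Real.cos (a * Real.cos (2 * Real.pi * u)) := by
  have : 2 * Real.pi * (u + 1/2) = 2 * Real.pi * u + Real.pi := by ring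
  rw [this, Real.cos_add_pi, mul_neg, Real.cos_neg]

private lemma sin_shift (a u : ℝ) :
    Real.sin (a * Real.cos (2 * Real.pi * (u + 1/2))) =
    -Real.sin (a * Real.cos (2 * Real.pi * u)) := by
  have : 2 * Real.pi * (u + 1/2) = 2 * Real.pi * u + Real.pi := by ring
  rw [this, Real.cos_add_pi, mul_neg, Real.sin_neg]

private lemma sin_half (a : ℝ) :
    (∫ u in (0:ℝ)..(1/2), Real.sin (a * Real.cos (2 * Real.pi * u))) = 0 := by
  have h := intervalIntegral.integral_comp_sub_left
    (a := (0:ℝ)) (b := 1/2) (fun u => Real.sin (a * Real.cos (2 * Real.pi * u))) (1/2)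
  have heq : ∀ u : ℝ, Real.sin (a * Real.cos (2 * Real.pi * (1/2 - u))) =
      -Real.sin (a * Real.cos (2 * Real.pi * u)) := by
    intro u
    have : 2 * Real.pi * (1/2 - u) = Real.pi - 2 * Real.pi * u := by ring
    rw [this, Real.cos_pi_sub, mul_neg, Real.sin_neg]
  simp only [heq] at h
  rw [intervalIntegral.integral_neg] at h
  norm_num at h
  linarith [h]

private lemma cos_half (a : ℝ) :
    (∫ u in (0:ℝ)..(1/2),
      (Real.cos (a * Real.cos (2 * Real.pi * u)) -
        ∫ s in (0:ℝ)..1, Real.cos (a * Real.cos (2 * Real.pi * s)))) = 0 := by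
  set g : ℝ → ℝ := fun u => Real.cos (a * Real.cos (2 * Real.pi * u)) with hg
  have hc : Continuous g := by fun_prop
  have hint : ∀ p q : ℝ, IntervalIntegrable g MeasureTheory.volume p q :=
    fun p q => hc.intervalIntegrable p q
  have split : (∫ u in (0:ℝ)..(1/2), g u) + (∫ u in (1/2:ℝ)..1, g u)
      = ∫ u in (0:ℝ)..1, g u :=
    intervalIntegral.integral_add_adjacent_intervals (hint _ _) (hint _ _)
  have comp : (∫ u in (0:ℝ)..(1/2), g (u + 1/2)) = ∫ u in (1/2:ℝ)..1, g u := by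
    have h := intervalIntegral.integral_comp_add_right (a := (0:ℝ)) (b := 1/2) g (1/2)
    rw [zero_add, show (1:ℝ)/2 + 1/2 = 1 by norm_num] at h
    exact h
  have hgs : ∀ u, g (u + 1/2) = g u := fun u => cos_shift a u
  simp only [hgs] at comp
  have hJ : (∫ u in (0:ℝ)..1, g u) = 2 * ∫ u in (0:ℝ)..(1/2), g u := by
    rw [← split, ← comp]; ring
  rw [intervalIntegral.integral_sub (hint _ _)
    (_root_.intervalIntegrable_const), intervalIntegral.integral_const, hJ,
    smul_eq_mul]
  ring

/-- Möbius quotient condition: with the ℤ-action `1·(x₁,x₂) = (−x₁, x₂+1)`,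
equivariant frames `e₁, e₂`, an invariant amplitude `α` and a half-integer
corrugation number `N ∈ ℕ + 1/2`, the corrugation term
`Γ(x,t) = K_c(α(x),t) e₁(x) + K_s(α(x),t) e₂(x)` satisfies
`Γ(1·x, N(x₂+1)) = Γ(x, N x₂)`, hence the corrugated map
`f₁ = f₀ + (1/N) Γ(·, N x₂)` descends to the Möbius strip whenever `f₀` does. -/
theorem mobius_descent
    (f₀ f₁ e₁ e₂ : ℝ × ℝ → EuclideanSpace ℝ (Fin 3)) (α : ℝ × ℝ → ℝ)
    (he₁ : ∀ x : ℝ × ℝ, e₁ (-x.1, x.2 + 1) = e₁ x)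
    (he₂ : ∀ x : ℝ × ℝ, e₂ (-x.1, x.2 + 1) = -e₂ x)
    (hα : ∀ x : ℝ × ℝ, α (-x.1, x.2 + 1) = α x)
    (hf₀ : ∀ x : ℝ × ℝ, f₀ (-x.1, x.2 + 1) = f₀ x)
    (n : ℕ) (N : ℝ) (hN : N = (n : ℝ) + 1/2)
    (Kc Ks : ℝ → ℝ → ℝ)
    (hKc : ∀ a t, Kc a t = ∫ u in (0:ℝ)..t,
      (Real.cos (a * Real.cos (2 * Real.pi * u)) -
        ∫ s in (0:ℝ)..1, Real.cos (a * Real.cos (2 * Real.pi * s))))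
    (hKs : ∀ a t, Ks a t = ∫ u in (0:ℝ)..t, Real.sin (a * Real.cos (2 * Real.pi * u)))
    (hf₁ : ∀ x : ℝ × ℝ, f₁ x = f₀ x + (1 / N) •
      (Kc (α x) (N * x.2) • e₁ x + Ks (α x) (N * x.2) • e₂ x)) :
    (∀ x : ℝ × ℝ,
      Kc (α (-x.1, x.2 + 1)) (N * (x.2 + 1)) • e₁ (-x.1, x.2 + 1) +
        Ks (α (-x.1, x.2 + 1)) (N * (x.2 + 1)) • e₂ (-x.1, x.2 + 1) =
      Kc (α x) (N * x.2) • e₁ x + Ks (α x) (N * x.2) • e₂ x) ∧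
    ∀ x : ℝ × ℝ, f₁ (-x.1, x.2 + 1) = f₁ x := by
  -- half-shift lemmas for Kc, Ks
  have hKc_half : ∀ a t, Kc a (t + 1/2) = Kc a t := by
    intro a t
    have hc : Continuous (fun u => Real.cos (a * Real.cos (2 * Real.pi * u)) -
        ∫ s in (0:ℝ)..1, Real.cos (a * Real.cos (2 * Real.pi * s))) := by fun_prop
    have h := shift_half _ 1 hc (fun u => by rw [cos_shift a u]; ring) (cos_half a) t
    rw [hKc, hKc, h, one_mul]
  have hKs_half : ∀ a t, Ks a (t + 1/2) = -Ks a t := by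
    intro a t
    have hc : Continuous (fun u => Real.sin (a * Real.cos (2 * Real.pi * u))) := by fun_prop
    have h := shift_half _ (-1) hc (fun u => by rw [sin_shift a u]; ring) (sin_half a) t
    rw [hKs, hKs, h, neg_one_mul]
  have hKc_one : ∀ a t, Kc a (t + 1) = Kc a t := by
    intro a t
    have : t + 1 = (t + 1/2) + 1/2 := by ring
    rw [this, hKc_half, hKc_half]
  have hKs_one : ∀ a t, Ks a (t + 1) = Ks a t := by
    intro a t
    have : t + 1 = (t + 1/2) + 1/2 := by ring
    rw [this, hKs_half, hKs_half, neg_neg]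
  have hKc_nat : ∀ (k : ℕ) a t, Kc a (t + k) = Kc a t := by
    intro k
    induction k with
    | zero => simp
    | succ m ih =>
      intro a t
      have : t + (m + 1 : ℕ) = (t + m) + 1 := by push_cast; ring
      rw [this, hKc_one, ih]
  have hKs_nat : ∀ (k : ℕ) a t, Ks a (t + k) = Ks a t := by
    intro k
    induction k with
    | zero => simp
    | succ m ih =>
      intro a t
      have : t + (m + 1 : ℕ) = (t + m) + 1 := by push_cast; ring
      rw [this, hKs_one, ih]
  have hKcN : ∀ a t, Kc a (t + N) = Kc a t := by
    intro a t
    have : t + N = (t + 1/2) + n := by rw [hN]; ring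
    rw [this, hKc_nat, hKc_half]
  have hKsN : ∀ a t, Ks a (t + N) = -Ks a t := by
    intro a t
    have : t + N = (t + 1/2) + n := by rw [hN]; ring
    rw [this, hKs_nat, hKs_half]
  have key : ∀ x : ℝ × ℝ,
      Kc (α (-x.1, x.2 + 1)) (N * (x.2 + 1)) • e₁ (-x.1, x.2 + 1) +
        Ks (α (-x.1, x.2 + 1)) (N * (x.2 + 1)) • e₂ (-x.1, x.2 + 1) =
      Kc (α x) (N * x.2) • e₁ x + Ks (α x) (N * x.2) • e₂ x := by
    intro x
    have hmul : N * (x.2 + 1) = N * x.2 + N := by ring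
    rw [hα, he₁, he₂, hmul, hKcN, hKsN]
    rw [smul_neg, neg_smul, neg_neg]
  refine ⟨key, fun x => ?_⟩
  rw [hf₁, hf₁, hf₀, key]
end
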